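/- Let 𝒜 be a relative Rota-Baxter Lie algebra and ℬ = (M →^S B, ρ_B, ρ_M, μ) a representation of 𝒜. Then the set 𝔤(𝒜,ℬ) of pairs (d_𝒜, d_ℬ) ∈ Der(𝒜) × End(ℬ), with d_𝒜 = (d_A,d_V), d_ℬ = (d_B,d_M), satisfying d_M(ρ_M(x)m) = ρ_M(x)d_M(m) + ρ_M(d_A x)m, d_B(ρ_B(x)a) = ρ_B(x)d_B(a) + ρ_B(d_A x)a, d_M(μ(v)a) = μ(d_V v)a + μ(v)d_B(a), and d_B S = S d_M, is a Lie subalgebra of Der(𝒜 ⋉ ℬ) under the componentwise commutator bracket. -/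

import Mathlib

/-!
Every defining condition of `𝔤(𝒜,ℬ)`, and of `Der(𝒜 ⋉ ℬ)`, is either a Leibniz rule
`d_N (f p q) = f (d_P p) q + f p (d_Q q)` for one of the bilinear structure maps, or an
intertwining relation `d_N ∘ S = S ∘ d_M` for one of the linear structure maps. Both kinds of
condition are linear in the endomorphisms and stable under commutators (the cross terms cancel),
and the semidirect-product bracket and action are built from the structure maps so that the
Leibniz rules of the pieces add up to the Leibniz rule of the whole.
-/

universe u

section
variable (K : Type u) [Field K]

/-- A relative Rota-Baxter Lie algebra: a Lie algebra `A`, a representation `rep` of `A`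
on `V`, and a relative Rota-Baxter operator `T : V → A`. -/
structure RelRB (A V : Type u) [AddCommGroup A] [Module K A]
    [AddCommGroup V] [Module K V] : Type u where
  br : A →ₗ[K] A →ₗ[K] A
  skew : ∀ x y, br x y + br y x = 0
  jacobi : ∀ x y z, br x (br y z) = br (br x y) z + br y (br x z)
  rep : A →ₗ[K] Module.End K V
  rep_br : ∀ x y, rep (br x y) = rep x * rep y - rep y * rep x
  T : V →ₗ[K] A
  rb : ∀ u v, br (T u) (T v) = T (rep (T u) v - rep (T v) u)

variable {A V B M : Type u}
  [AddCommGroup A] [Module K A] [AddCommGroup V] [Module K V]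
  [AddCommGroup B] [Module K B] [AddCommGroup M] [Module K M]

/-- A representation of a relative Rota-Baxter Lie algebra `𝒜` on a 2-term complex
`M →^S B`. -/
structure RepRB (𝒜 : RelRB K A V) (B M : Type u) [AddCommGroup B] [Module K B]
    [AddCommGroup M] [Module K M] : Type u where
  S : M →ₗ[K] B
  ρB : A →ₗ[K] Module.End K B
  ρB_br : ∀ x y, ρB (𝒜.br x y) = ρB x * ρB y - ρB y * ρB x
  ρM : A →ₗ[K] Module.End K M
  ρM_br : ∀ x y, ρM (𝒜.br x y) = ρM x * ρM y - ρM y * ρM x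
  μ : V →ₗ[K] B →ₗ[K] M
  re1 : ∀ x v, μ (𝒜.rep x v) = ρM x ∘ₗ μ v - μ v ∘ₗ ρB x
  re2 : ∀ v, ρB (𝒜.T v) ∘ₗ S = S ∘ₗ ρM (𝒜.T v) + S ∘ₗ (μ v ∘ₗ S)
/-- A derivation of a relative Rota-Baxter Lie algebra. -/
def IsDer (𝒜 : RelRB K A V) (dA : Module.End K A) (dV : Module.End K V) : Prop :=
  (∀ x y, dA (𝒜.br x y) = 𝒜.br (dA x) y + 𝒜.br x (dA y)) ∧
  (∀ v, 𝒜.T (dV v) = dA (𝒜.T v)) ∧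
  (∀ x v, dV (𝒜.rep x v) = 𝒜.rep x (dV v) + 𝒜.rep (dA x) v)
/-- Membership in `𝔤(𝒜,ℬ)`: a derivation of `𝒜` together with an endomorphism pair of
`ℬ` satisfying the four compatibility conditions (Bd1)-(Bd4). -/
def GPair (𝒜 : RelRB K A V) (R : RepRB K 𝒜 B M)
    (dA : Module.End K A) (dV : Module.End K V)
    (dB : Module.End K B) (dM : Module.End K M) : Prop :=
  IsDer K 𝒜 dA dV ∧
  (∀ x m, dM (R.ρM x m) = R.ρM x (dM m) + R.ρM (dA x) m) ∧
  (∀ x a, dB (R.ρB x a) = R.ρB x (dB a) + R.ρB (dA x) a) ∧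
  (∀ v a, dM (R.μ v a) = R.μ (dV v) a + R.μ v (dB a)) ∧
  (∀ m, dB (R.S m) = R.S (dM m))

/-- Derivation conditions for a pair of plain maps with respect to plain structure
maps (used for the semidirect product). -/
def IsDerF {α β : Type u} [AddCommGroup α] [AddCommGroup β]
    (br : α → α → α) (rep : α → β → β) (Top : β → α)
    (dA : α → α) (dV : β → β) : Prop :=
  (∀ x y, dA (br x y) = br (dA x) y + br x (dA y)) ∧
  (∀ v, dA (Top v) = Top (dV v)) ∧
  (∀ x v, dV (rep x v) = rep x (dV v) + rep (dA x) v)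

section Leibniz

variable {R P Q N P' Q' N' : Type*} [CommRing R]
  [AddCommGroup P] [Module R P] [AddCommGroup Q] [Module R Q] [AddCommGroup N] [Module R N]
  [AddCommGroup P'] [Module R P'] [AddCommGroup Q'] [Module R Q'] [AddCommGroup N'] [Module R N']

def IsLeibniz (f : P →ₗ[R] Q →ₗ[R] N) (dP : Module.End R P) (dQ : Module.End R Q)
    (dN : Module.End R N) : Prop :=
  ∀ p q, dN (f p q) = f (dP p) q + f p (dQ q)

namespace IsLeibniz

variable {f : P →ₗ[R] Q →ₗ[R] N} {dP dP' : Module.End R P} {dQ dQ' : Module.End R Q}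
  {dN dN' : Module.End R N}

theorem zero (f : P →ₗ[R] Q →ₗ[R] N) : IsLeibniz f 0 0 0 := fun p q => by simp

theorem add (h : IsLeibniz f dP dQ dN) (h' : IsLeibniz f dP' dQ' dN') :
    IsLeibniz f (dP + dP') (dQ + dQ') (dN + dN') := fun p q => by
  simp only [LinearMap.add_apply, map_add, h p q, h' p q]
  abel

theorem smul (c : R) (h : IsLeibniz f dP dQ dN) : IsLeibniz f (c • dP) (c • dQ) (c • dN) :=
  fun p q => by simp only [LinearMap.smul_apply, map_smul, h p q, smul_add]

theorem commutator (h : IsLeibniz f dP dQ dN) (h' : IsLeibniz f dP' dQ' dN') :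
    IsLeibniz f (dP * dP' - dP' * dP) (dQ * dQ' - dQ' * dQ) (dN * dN' - dN' * dN) :=
  fun p q => by
    unfold IsLeibniz at h h'
    simp only [LinearMap.sub_apply, Module.End.mul_apply, map_sub, map_add, h, h']
    abel

theorem semidirect {g : P →ₗ[R] Q' →ₗ[R] N'} {h : Q →ₗ[R] P' →ₗ[R] N'}
    {dP' : Module.End R P'} {dQ' : Module.End R Q'} {dN' : Module.End R N'}
    (hf : IsLeibniz f dP dQ dN) (hg : IsLeibniz g dP dQ' dN') (hh : IsLeibniz h dQ dP' dN')
    (p : P × P') (q : Q × Q') :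
    Prod.map dN dN' (f p.1 q.1, g p.1 q.2 - h q.1 p.2) =
      (f (dP p.1) q.1, g (dP p.1) q.2 - h q.1 (dP' p.2)) +
        (f p.1 (dQ q.1), g p.1 (dQ' q.2) - h (dQ q.1) p.2) := by
  simp only [Prod.map, map_sub, hf p.1 q.1, hg p.1 q.2, hh q.1 p.2, Prod.mk_add_mk,
    Prod.mk.injEq, true_and]
  abel

end IsLeibniz

def Intertwines (S : P →ₗ[R] N) (dP : Module.End R P) (dN : Module.End R N) : Prop :=
  ∀ p, dN (S p) = S (dP p)

namespace Intertwines

variable {S : P →ₗ[R] N} {dP dP' : Module.End R P} {dN dN' : Module.End R N}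

theorem zero (S : P →ₗ[R] N) : Intertwines S 0 0 := fun p => by simp

theorem add (h : Intertwines S dP dN) (h' : Intertwines S dP' dN') :
    Intertwines S (dP + dP') (dN + dN') := fun p => by
  simp only [LinearMap.add_apply, map_add, h p, h' p]

theorem smul (c : R) (h : Intertwines S dP dN) : Intertwines S (c • dP) (c • dN) :=
  fun p => by simp only [LinearMap.smul_apply, map_smul, h p]

theorem commutator (h : Intertwines S dP dN) (h' : Intertwines S dP' dN') :
    Intertwines S (dP * dP' - dP' * dP) (dN * dN' - dN' * dN) := fun p => by
  simp only [LinearMap.sub_apply, Module.End.mul_apply, map_sub, h _, h' _]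

end Intertwines

end Leibniz

theorem gPair_iff (𝒜 : RelRB K A V) (R : RepRB K 𝒜 B M) (dA : Module.End K A)
    (dV : Module.End K V) (dB : Module.End K B) (dM : Module.End K M) :
    GPair K 𝒜 R dA dV dB dM ↔
      IsLeibniz 𝒜.br dA dA dA ∧ Intertwines 𝒜.T dV dA ∧ IsLeibniz 𝒜.rep dA dV dV ∧
        IsLeibniz R.ρM dA dM dM ∧ IsLeibniz R.ρB dA dB dB ∧ IsLeibniz R.μ dV dB dM ∧
          Intertwines R.S dM dB := by
  simp only [GPair, IsDer, IsLeibniz, Intertwines, eq_comm (a := 𝒜.T _), add_comm, and_assoc]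

def gPairs (𝒜 : RelRB K A V) (R : RepRB K 𝒜 B M) :
    Submodule K (Module.End K A × Module.End K V × Module.End K B × Module.End K M) where
  carrier := {d | GPair K 𝒜 R d.1 d.2.1 d.2.2.1 d.2.2.2}
  add_mem' := by
    rintro d e hd he
    obtain ⟨h₁, h₂, h₃, h₄, h₅, h₆, h₇⟩ := (gPair_iff K 𝒜 R ..).1 hd
    obtain ⟨g₁, g₂, g₃, g₄, g₅, g₆, g₇⟩ := (gPair_iff K 𝒜 R ..).1 he
    exact (gPair_iff K 𝒜 R ..).2
      ⟨h₁.add g₁, h₂.add g₂, h₃.add g₃, h₄.add g₄, h₅.add g₅, h₆.add g₆, h₇.add g₇⟩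
  zero_mem' := (gPair_iff K 𝒜 R ..).2
    ⟨.zero _, .zero _, .zero _, .zero _, .zero _, .zero _, .zero _⟩
  smul_mem' := by
    rintro c d hd
    obtain ⟨h₁, h₂, h₃, h₄, h₅, h₆, h₇⟩ := (gPair_iff K 𝒜 R ..).1 hd
    exact (gPair_iff K 𝒜 R ..).2
      ⟨h₁.smul c, h₂.smul c, h₃.smul c, h₄.smul c, h₅.smul c, h₆.smul c, h₇.smul c⟩

theorem GPair.commutator {𝒜 : RelRB K A V} {R : RepRB K 𝒜 B M}
    {dA dA' : Module.End K A} {dV dV' : Module.End K V} {dB dB' : Module.End K B}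
    {dM dM' : Module.End K M}
    (hd : GPair K 𝒜 R dA dV dB dM) (hd' : GPair K 𝒜 R dA' dV' dB' dM') :
    GPair K 𝒜 R (dA * dA' - dA' * dA) (dV * dV' - dV' * dV)
      (dB * dB' - dB' * dB) (dM * dM' - dM' * dM) := by
  obtain ⟨h₁, h₂, h₃, h₄, h₅, h₆, h₇⟩ := (gPair_iff K 𝒜 R ..).1 hd
  obtain ⟨g₁, g₂, g₃, g₄, g₅, g₆, g₇⟩ := (gPair_iff K 𝒜 R ..).1 hd'
  exact (gPair_iff K 𝒜 R ..).2 ⟨h₁.commutator g₁, h₂.commutator g₂, h₃.commutator g₃,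
    h₄.commutator g₄, h₅.commutator g₅, h₆.commutator g₆, h₇.commutator g₇⟩

/-- `𝔤(𝒜,ℬ)` is a Lie subalgebra of `Der(𝒜 ⋉ ℬ)`: it is a linear
subspace, every element gives a derivation of the semidirect product `𝒜 ⋉ ℬ`, and it is
closed under the componentwise commutator bracket. -/
theorem g_pairs_lie_subalgebra_of_der_semidirect
    (𝒜 : RelRB K A V) (R : RepRB K 𝒜 B M) :
    let br' : A × B → A × B → A × B := fun p q =>
      (𝒜.br p.1 q.1, R.ρB p.1 q.2 - R.ρB q.1 p.2)
    let rep' : A × B → V × M → V × M := fun p u =>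
      (𝒜.rep p.1 u.1, R.ρM p.1 u.2 - R.μ u.1 p.2)
    let T' : V × M → A × B := fun u => (𝒜.T u.1, R.S u.2)
    (∃ W : Submodule K
        (Module.End K A × Module.End K V × Module.End K B × Module.End K M),
      ∀ d, d ∈ W ↔ GPair K 𝒜 R d.1 d.2.1 d.2.2.1 d.2.2.2) ∧
    (∀ dA dV dB dM, GPair K 𝒜 R dA dV dB dM →
      IsDerF (br := br') (rep := rep') (Top := T')
        (Prod.map (fun x => dA x) fun a => dB a)
        (Prod.map (fun v => dV v) fun m => dM m)) ∧
    (∀ dA dV dB dM dA' dV' dB' dM',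
      GPair K 𝒜 R dA dV dB dM → GPair K 𝒜 R dA' dV' dB' dM' →
      GPair K 𝒜 R (dA * dA' - dA' * dA) (dV * dV' - dV' * dV)
        (dB * dB' - dB' * dB) (dM * dM' - dM' * dM)) := by
  intro br' rep' T'
  refine ⟨⟨gPairs K 𝒜 R, fun _ => Iff.rfl⟩, fun dA dV dB dM hd => ?_,
    fun _ _ _ _ _ _ _ _ => GPair.commutator K⟩
  obtain ⟨hbr, hT, hrep, hρM, hρB, hμ, hS⟩ := (gPair_iff K 𝒜 R ..).1 hd
  exact ⟨hbr.semidirect hρB hρB, fun u => Prod.ext (hT u.1) (hS u.2),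
    fun p u => (hrep.semidirect hρM hμ p u).trans (add_comm _ _)⟩

end
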